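/- Let M:(ℝ,≤)²→vect_F be a pointwise finite-dimensional persistence module admitting a finite convex isotopy subdivision of (ℝ,≤)² subordinate to M, with poset of chambers (P,≤) and chamber map F_M:(ℝ,≤)²→(P,≤). Define Ñ:(P,≤)→vect_F by Ñ_p = lim_{J_p}M for p ∈ P, Ñ(p≤p) = id, and Ñ(p≤q) = φ_{J_pJ_q} for p < q, where φ_{J_pJ_q} is the canonical map between limits induced by M. Then M ≅ Ñ ∘ F_M; in particular, the finite convex isotopy subdivision yields a finite encoding of M by the finite poset (P,≤). -/

import Mathlib

/-- A persistence module over a preorder `P` with coefficients in a field `F`: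
a functor `(P,≤) → Vect_F`, given by vector spaces `V p` and linear maps
`map : i ≤ j → (V i →ₗ[F] V j)` satisfying the functoriality equations. -/
structure PersistenceModule (F : Type) [Field F] (P : Type) [Preorder P] where
  V : P → Type
  [addCommGroup : ∀ p, AddCommGroup (V p)]
  [module : ∀ p, Module F (V p)]
  map : ∀ {i j : P}, i ≤ j → (V i →ₗ[F] V j)
  map_id : ∀ i : P, map (le_refl i) = LinearMap.id
  map_comp : ∀ {i j k : P} (hij : i ≤ j) (hjk : j ≤ k),
    (map hjk).comp (map hij) = map (hij.trans hjk)

attribute [instance] PersistenceModule.addCommGroup PersistenceModule.module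

/-- A zigzag path `a - x₁ - ⋯ - xₙ - b` in a preorder, where each consecutive
pair of points is comparable. -/
inductive Zigzag (P : Type) [Preorder P] : P → P → Type
  | single (a : P) : Zigzag P a a
  | consLe {a b c : P} (h : a ≤ b) (p : Zigzag P b c) : Zigzag P a c
  | consGe {a b c : P} (h : b ≤ a) (p : Zigzag P b c) : Zigzag P a c

/-- Convexity of a subset of a poset: `i ≤ j ≤ k` with `i, k ∈ J` implies `j ∈ J`. -/
def PosetConvex {P : Type} [Preorder P] (J : Set P) : Prop :=
  ∀ i ∈ J, ∀ k ∈ J, ∀ j : P, i ≤ j → j ≤ k → j ∈ J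

/-- Connectedness: any two points of `J` are joined by a finite zigzag path inside `J`. -/
def ZigzagConnected {P : Type} [Preorder P] (J : Set P) : Prop :=
  ∀ a b : J, Nonempty (Zigzag (↥J) a b)

/-- Restriction of a persistence module to a subset of the parameter poset. -/
def PersistenceModule.restrict {F : Type} [Field F] {P : Type} [Preorder P]
    (M : PersistenceModule F P) (J : Set P) : PersistenceModule F ↥J where
  V i := M.V ↑i
  map {i j} h := M.map (show (i : P) ≤ (j : P) from h)
  map_id i := M.map_id ↑i
  map_comp _ _ := M.map_comp _ _

/-- `L` together with the legs `σ` is a limit cone over the persistence module `M`. -/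
def IsLimitCone {F : Type} [Field F] {P : Type} [Preorder P] (M : PersistenceModule F P)
    (L : Type) [AddCommGroup L] [Module F L] (σ : ∀ i : P, L →ₗ[F] M.V i) : Prop :=
  (∀ (i j : P) (h : i ≤ j), (M.map h).comp (σ i) = σ j) ∧
  ∀ (N : Type) [AddCommGroup N] [Module F N] (τ : ∀ i : P, N →ₗ[F] M.V i),
    (∀ (i j : P) (h : i ≤ j), (M.map h).comp (τ i) = τ j) →
    ∃! φ : N →ₗ[F] L, ∀ i : P, (σ i).comp φ = τ i

/-- The relation `p → q` between chambers of a subdivision `j ↦ C j`: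
`p → q` iff `p = q`, or `p ≠ q` and there are `x ∈ J_p`, `y ∈ J_q` with `x ≤ y`. -/
def chamberRel (C : ℝ × ℝ → Set (ℝ × ℝ)) : Set (ℝ × ℝ) → Set (ℝ × ℝ) → Prop :=
  fun A B => A ∈ Set.range C ∧ B ∈ Set.range C ∧
    (A = B ∨ (A ≠ B ∧ ∃ x ∈ A, ∃ y ∈ B, x ≤ y))

/-- The set of chambers of the subdivision `j ↦ C j`. -/
def ChamberPoset (C : ℝ × ℝ → Set (ℝ × ℝ)) : Type :=
  {A : Set (ℝ × ℝ) // A ∈ Set.range C}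

/-- The chambers carry the preorder generated (as reflexive-transitive closure)
by `chamberRel`. -/
instance (C : ℝ × ℝ → Set (ℝ × ℝ)) : Preorder (ChamberPoset C) where
  le A B := Relation.ReflTransGen (chamberRel C) A.1 B.1
  le_refl A := Relation.ReflTransGen.refl
  le_trans A B D hAB hBD := Relation.ReflTransGen.trans hAB hBD

/-- The map `F_M` sending a point of the plane to its chamber. -/
def chamberMap (C : ℝ × ℝ → Set (ℝ × ℝ)) : ℝ × ℝ → ChamberPoset C :=
  fun j => ⟨C j, ⟨j, rfl⟩⟩

theorem chamberMap_monotone (C : ℝ × ℝ → Set (ℝ × ℝ)) (hmem : ∀ j, j ∈ C j) :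
    Monotone (chamberMap C) := by
  intro x y hxy
  show Relation.ReflTransGen (chamberRel C) (C x) (C y)
  refine Relation.ReflTransGen.single ⟨⟨x, rfl⟩, ⟨y, rfl⟩, ?_⟩
  by_cases h : C x = C y
  · exact Or.inl h
  · exact Or.inr ⟨h, x, hmem x, y, hmem y, hxy⟩


/-!
Every chamber `J` is convex and zigzag-connected and `M` is constant on it, so each leg
`lim_J M → M i` of a limit cone is an isomorphism; inverting these legs gives `M ≅ Ñ ∘ F_M`,
natural by the defining property of the maps `φ`.

A leg is injective because a compatible family is determined by its value at one point once the
transition maps are injective. Surjectivity amounts to transport along zigzags in `J` being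
independent of the zigzag. Call two vectors over points of `J` linked if they agree over some
common upper bound in `J`; by convexity they then agree over every common upper bound.
A chain of linked vectors whose end points have their join in `J` can be shortened: either every
point of the chain lies below that join, or a point of maximal first (or second) coordinate
dominates its neighbours in that coordinate, and in a product of two linear orders one of these
neighbours then lies below the join of the point with the other, so the point can be skipped.
-/

open Function Relation

theorem Relation.ReflTransGen.exists_chain {α : Type*} {r : α → α → Prop} {a b : α}
    (h : ReflTransGen r a b) :
    ∃ (n : ℕ) (f : ℕ → α), f 0 = a ∧ f n = b ∧ ∀ k < n, r (f k) (f (k + 1)) := by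
  induction h with
  | refl => exact ⟨0, fun _ => a, rfl, rfl, by simp⟩
  | @tail b c _ hbc ih =>
    obtain ⟨n, f, h0, hn, hf⟩ := ih
    refine ⟨n + 1, fun k => if k ≤ n then f k else c, by simpa using h0, by simp, fun k hk => ?_⟩
    rcases Nat.lt_succ_iff_lt_or_eq.1 hk with hk | rfl
    · simp [hk.le, Nat.succ_le_of_lt hk, hf k hk]
    · simp [hn, hbc]

theorem exists_chain_skip {α : Type*} {r : α → α → Prop} {f : ℕ → α} {n s : ℕ}
    (hf : ∀ k < n + 1, r (f k) (f (k + 1))) (hs : s + 1 ≤ n) (hskip : r (f s) (f (s + 2))) :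
    ∃ g : ℕ → α, g 0 = f 0 ∧ g n = f (n + 1) ∧ ∀ k < n, r (g k) (g (k + 1)) := by
  refine ⟨fun k => if k ≤ s then f k else f (k + 1), by simp,
    by simp [show ¬n ≤ s by omega], fun k hk => ?_⟩
  rcases lt_trichotomy k s with hks | rfl | hks
  · simp [hks.le, show k + 1 ≤ s by omega, hf k (by omega)]
  · simpa using hskip
  · simp [show ¬k ≤ s by omega, show ¬k + 1 ≤ s by omega, hf (k + 1) (by omega)]

theorem exists_local_max_of_lt {γ : Type*} [LinearOrder γ] (u : ℕ → γ) {n i : ℕ} (hi : i ≤ n)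
    (h0 : u 0 < u i) (hn : u n < u i) :
    ∃ s, s + 2 ≤ n ∧ u s ≤ u (s + 1) ∧ u (s + 2) ≤ u (s + 1) := by
  obtain ⟨m, hm, hmax⟩ := Finset.exists_max_image (Finset.range (n + 1)) u
    ⟨i, Finset.mem_range.2 (by omega)⟩
  have hle : ∀ k ≤ n, u k ≤ u m := fun k hk => hmax k (Finset.mem_range.2 (by omega))
  have hm0 : m ≠ 0 := by rintro rfl; exact (h0.trans_le (hle i hi)).false
  have hmn : m ≠ n := by rintro rfl; exact (hn.trans_le (hle i hi)).false
  obtain ⟨s, rfl⟩ := Nat.exists_eq_succ_of_ne_zero hm0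
  have := Finset.mem_range.1 hm
  exact ⟨s, by omega, hle s (by omega), hle (s + 2) (by omega)⟩

namespace Prod

variable {α β : Type*} [LinearOrder α] [LinearOrder β]

theorem le_sup_or_le_sup_of_fst_le {a b c : α × β} (ha : a.1 ≤ b.1) (hc : c.1 ≤ b.1) :
    a ≤ b ⊔ c ∨ c ≤ b ⊔ a := by
  rcases le_total a.2 c.2 with h | h
  · exact Or.inl ⟨le_sup_of_le_left ha, le_sup_of_le_right h⟩
  · exact Or.inr ⟨le_sup_of_le_left hc, le_sup_of_le_right h⟩

theorem le_sup_or_le_sup_of_snd_le {a b c : α × β} (ha : a.2 ≤ b.2) (hc : c.2 ≤ b.2) :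
    a ≤ b ⊔ c ∨ c ≤ b ⊔ a := by
  rcases le_total a.1 c.1 with h | h
  · exact Or.inl ⟨le_sup_of_le_right h, le_sup_of_le_left ha⟩
  · exact Or.inr ⟨le_sup_of_le_right h, le_sup_of_le_left hc⟩

theorem exists_le_sup_of_not_le_sup {p : ℕ → α × β} {n k : ℕ} (hk : k ≤ n)
    (hpk : ¬p k ≤ p 0 ⊔ p n) :
    ∃ s, s + 2 ≤ n ∧ (p s ≤ p (s + 1) ⊔ p (s + 2) ∨ p (s + 2) ≤ p (s + 1) ⊔ p s) := by
  rw [Prod.le_def, not_and_or, not_le, not_le] at hpk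
  rcases hpk with h | h
  · obtain ⟨s, hs, h1, h2⟩ := exists_local_max_of_lt (fun i => (p i).1) hk
      (lt_of_le_of_lt le_sup_left h) (lt_of_le_of_lt le_sup_right h)
    exact ⟨s, hs, le_sup_or_le_sup_of_fst_le h1 h2⟩
  · obtain ⟨s, hs, h1, h2⟩ := exists_local_max_of_lt (fun i => (p i).2) hk
      (lt_of_le_of_lt le_sup_left h) (lt_of_le_of_lt le_sup_right h)
    exact ⟨s, hs, le_sup_or_le_sup_of_snd_le h1 h2⟩

end Prod

namespace PersistenceModule

variable {F : Type} [Field F]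

section Preorder

variable {P : Type} [Preorder P] (M : PersistenceModule F P)

def IsCompatible (t : ∀ i, M.V i) : Prop :=
  ∀ ⦃i j : P⦄ (h : i ≤ j), M.map h (t i) = t j

def IsoOn (J : Set P) : Prop :=
  ∀ ⦃x y : P⦄, x ∈ J → y ∈ J → ∀ h : x ≤ y, Bijective (M.map h)

def Linked (J : Set P) (x y : Σ i, M.V i) : Prop :=
  x.1 ∈ J ∧ y.1 ∈ J ∧ ∃ c ∈ J, ∃ (hx : x.1 ≤ c) (hy : y.1 ≤ c), M.map hx x.2 = M.map hy y.2

variable {M}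

@[simp]
theorem map_self {i : P} (h : i ≤ i) (v : M.V i) : M.map h v = v := by
  rw [M.map_id]; rfl

theorem map_map {i j k : P} (hij : i ≤ j) (hjk : j ≤ k) (v : M.V i) :
    M.map hjk (M.map hij v) = M.map (hij.trans hjk) v :=
  LinearMap.congr_fun (M.map_comp hij hjk) v

theorem IsCompatible.eq_of_zigzag {t t' : ∀ i, M.V i} (ht : M.IsCompatible t)
    (ht' : M.IsCompatible t') (hinj : ∀ ⦃i j : P⦄ (h : i ≤ j), Injective (M.map h)) {a b : P}
    (z : Zigzag P a b) (hab : t a = t' a) : t b = t' b := by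
  induction z with
  | single => exact hab
  | consLe h _ ih => exact ih (by rw [← ht h, ← ht' h, hab])
  | consGe h _ ih => exact ih (hinj h (by rw [ht h, ht' h, hab]))

variable {J : Set P} {x y z : Σ i, M.V i}

theorem Linked.refl (hx : x.1 ∈ J) : M.Linked J x x :=
  ⟨hx, hx, x.1, hx, le_rfl, le_rfl, rfl⟩

theorem Linked.symm (h : M.Linked J x y) : M.Linked J y x := by
  obtain ⟨hx, hy, c, hc, hxc, hyc, heq⟩ := h
  exact ⟨hy, hx, c, hc, hyc, hxc, heq.symm⟩

instance : Std.Symm (M.Linked J) := ⟨fun _ _ => Linked.symm⟩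

theorem linked_map {i j : P} (hi : i ∈ J) (hj : j ∈ J) (h : i ≤ j) (v : M.V i) :
    M.Linked J ⟨i, v⟩ ⟨j, M.map h v⟩ :=
  ⟨hi, hj, j, hj, h, le_rfl, (map_self _ _).symm⟩

theorem exists_linked_of_le (hiso : M.IsoOn J) {i j : P} (hi : i ∈ J) (hj : j ∈ J) (h : j ≤ i)
    (v : M.V i) : ∃ u : M.V j, M.Linked J ⟨i, v⟩ ⟨j, u⟩ := by
  obtain ⟨u, hu⟩ := (hiso hj hi h).surjective v
  exact ⟨u, hu ▸ (linked_map hj hi h u).symm⟩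

theorem exists_reflTransGen_linked_of_zigzag (hiso : M.IsoOn J) {a b : J} (z : Zigzag J a b)
    (w : M.V a) : ∃ u : M.V b, ReflTransGen (M.Linked J) ⟨a, w⟩ ⟨b, u⟩ := by
  induction z with
  | single => exact ⟨w, .refl⟩
  | @consLe a c _ h _ ih =>
    obtain ⟨u, hu⟩ := ih (M.map h w)
    exact ⟨u, .head (linked_map a.2 c.2 h w) hu⟩
  | @consGe a c _ h _ ih =>
    obtain ⟨v, hv⟩ := exists_linked_of_le hiso a.2 c.2 h w
    obtain ⟨u, hu⟩ := ih v
    exact ⟨u, .head hv hu⟩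

end Preorder

section SemilatticeSup

variable {P : Type} [SemilatticeSup P] {M : PersistenceModule F P} {J : Set P}
  {x y z : Σ i, M.V i}

theorem Linked.map_eq (hconv : PosetConvex J) (hiso : M.IsoOn J) (hxy : M.Linked J x y) {c : P}
    (hxc : x.1 ≤ c) (hyc : y.1 ≤ c) : M.map hxc x.2 = M.map hyc y.2 := by
  obtain ⟨hx, -, d, hd, hxd, hyd, heq⟩ := hxy
  have hs : x.1 ⊔ y.1 ∈ J := hconv x.1 hx d hd _ le_sup_left (sup_le hxd hyd)
  have hjoin : M.map (le_sup_left : x.1 ≤ x.1 ⊔ y.1) x.2 = M.map le_sup_right y.2 :=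
    (hiso hs hd (sup_le hxd hyd)).injective (by rwa [map_map, map_map])
  rw [← map_map le_sup_left (sup_le hxc hyc), hjoin, map_map]

theorem Linked.trans_of_le_sup (hconv : PosetConvex J) (hiso : M.IsoOn J)
    (hxy : M.Linked J x y) (hyz : M.Linked J y z) (h : x.1 ≤ y.1 ⊔ z.1) : M.Linked J x z := by
  obtain ⟨d, hd, hyd, hzd, -⟩ := hyz.2.2
  have hc : y.1 ⊔ z.1 ∈ J := hconv y.1 hyz.1 d hd _ le_sup_left (sup_le hyd hzd)
  refine ⟨hxy.1, hyz.2.1, _, hc, h, le_sup_right, ?_⟩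
  rw [hxy.map_eq hconv hiso h le_sup_left, hyz.map_eq hconv hiso le_sup_left le_sup_right]

theorem linked_of_chain_of_le (hconv : PosetConvex J) (hiso : M.IsoOn J) {n : ℕ}
    {f : ℕ → Σ i, M.V i} (hf : ∀ k < n + 1, M.Linked J (f k) (f (k + 1))) {c : P} (hc : c ∈ J)
    (hfc : ∀ k ≤ n + 1, (f k).1 ≤ c) : M.Linked J (f 0) (f (n + 1)) := by
  suffices h : ∀ k (hk : k ≤ n + 1),
      M.map (hfc k hk) (f k).2 = M.map (hfc 0 (Nat.zero_le _)) (f 0).2 from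
    ⟨(hf 0 (by omega)).1, (hf n (by omega)).2.1, c, hc, _, _, (h _ le_rfl).symm⟩
  intro k hk
  induction k with
  | zero => rfl
  | succ k ih => rw [← ih (by omega), (hf k (by omega)).map_eq hconv hiso]

end SemilatticeSup

section Plane

variable {α β : Type} [LinearOrder α] [LinearOrder β] {M : PersistenceModule F (α × β)}
  {J : Set (α × β)}

theorem linked_of_chain (hconv : PosetConvex J) (hiso : M.IsoOn J) (n : ℕ)
    (f : ℕ → Σ i, M.V i) (hf : ∀ k < n, M.Linked J (f k) (f (k + 1)))
    (hJ : (f 0).1 ⊔ (f n).1 ∈ J) : M.Linked J (f 0) (f n) := by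
  induction n generalizing f with
  | zero => exact .refl (by simpa using hJ)
  | succ n ih =>
    by_cases hle : ∀ k ≤ n + 1, (f k).1 ≤ (f 0).1 ⊔ (f (n + 1)).1
    · exact linked_of_chain_of_le hconv hiso hf hJ hle
    push Not at hle
    obtain ⟨k, hk, hfk⟩ := hle
    obtain ⟨s, hs, hdom⟩ := Prod.exists_le_sup_of_not_le_sup (p := fun k => (f k).1) hk hfk
    have hskip : M.Linked J (f s) (f (s + 2)) := by
      rcases hdom with h | h
      · exact (hf s (by omega)).trans_of_le_sup hconv hiso (hf (s + 1) (by omega)) h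
      · exact ((hf (s + 1) (by omega)).symm.trans_of_le_sup hconv hiso
          (hf s (by omega)).symm h).symm
    obtain ⟨g, hg0, hgn, hg⟩ := exists_chain_skip hf (by omega) hskip
    rw [← hg0, ← hgn] at hJ ⊢
    exact ih g hg hJ

theorem Linked.of_reflTransGen (hconv : PosetConvex J) (hiso : M.IsoOn J)
    {x y : Σ i, M.V i} (h : ReflTransGen (M.Linked J) x y) (hJ : x.1 ⊔ y.1 ∈ J) :
    M.Linked J x y := by
  obtain ⟨n, f, rfl, rfl, hf⟩ := h.exists_chain
  exact linked_of_chain hconv hiso n f hf hJ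

theorem eq_of_reflTransGen_linked (hconv : PosetConvex J) (hiso : M.IsoOn J) {a : α × β}
    (ha : a ∈ J) {u u' : M.V a} (h : ReflTransGen (M.Linked J) ⟨a, u⟩ ⟨a, u'⟩) : u = u' := by
  simpa using (Linked.of_reflTransGen hconv hiso h (by simpa using ha)).map_eq hconv hiso le_rfl
    le_rfl

end Plane

end PersistenceModule

namespace IsLimitCone

open PersistenceModule

variable {F : Type} [Field F] {L : Type} [AddCommGroup L] [Module F L]

section Preorder

variable {P : Type} [Preorder P] {M : PersistenceModule F P} {σ : ∀ i, L →ₗ[F] M.V i}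

theorem isCompatible (hL : IsLimitCone M L σ) (v : L) : M.IsCompatible fun i => σ i v :=
  fun i j h => LinearMap.congr_fun (hL.1 i j h) v

theorem ext (hL : IsLimitCone M L σ) {v v' : L} (h : ∀ i, σ i v = σ i v') : v = v' := by
  obtain ⟨φ, -, huniq⟩ := hL.2 F (fun i => LinearMap.toSpanSingleton F _ (σ i v))
    fun i j hij => by rw [LinearMap.comp_toSpanSingleton, hL.isCompatible v hij]
  have hv := huniq (LinearMap.toSpanSingleton F L v) fun i => LinearMap.comp_toSpanSingleton _ _
  have hv' := huniq (LinearMap.toSpanSingleton F L v') fun i => by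
    rw [LinearMap.comp_toSpanSingleton, h]
  simpa using LinearMap.congr_fun (hv.trans hv'.symm) 1

theorem exists_of_isCompatible (hL : IsLimitCone M L σ) {u : ∀ i, M.V i}
    (hu : M.IsCompatible u) : ∃ v, ∀ i, σ i v = u i := by
  obtain ⟨φ, hφ, -⟩ := hL.2 F (fun i => LinearMap.toSpanSingleton F _ (u i))
    fun i j hij => by rw [LinearMap.comp_toSpanSingleton, hu hij]
  exact ⟨φ 1, fun i => by simpa using LinearMap.congr_fun (hφ i) 1⟩

end Preorder

theorem bijective_leg {α β : Type} [LinearOrder α] [LinearOrder β]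
    {M : PersistenceModule F (α × β)} {J : Set (α × β)} (hconv : PosetConvex J)
    (hconn : ZigzagConnected J) (hiso : M.IsoOn J) {σ : ∀ i : J, L →ₗ[F] M.V i}
    (hL : IsLimitCone (M.restrict J) L σ) (i₀ : J) : Bijective (σ i₀) := by
  refine ⟨fun v v' h => hL.ext fun i => (hL.isCompatible v).eq_of_zigzag
    (hL.isCompatible v') (fun i j hij => (hiso i.2 j.2 hij).injective) (hconn i₀ i).some h,
    fun w => ?_⟩
  choose u hu using fun i : J => exists_reflTransGen_linked_of_zigzag hiso (hconn i₀ i).some w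
  have hcomp : (M.restrict J).IsCompatible u := fun i j hij =>
    eq_of_reflTransGen_linked hconv hiso j.2 <|
      .head (linked_map i.2 j.2 hij (u i)).symm ((Std.Symm.symm _ _ (hu i)).trans (hu j))
  obtain ⟨v, hv⟩ := hL.exists_of_isCompatible hcomp
  exact ⟨v, (hv i₀).trans (eq_of_reflTransGen_linked hconv hiso i₀.2 (hu i₀)).symm⟩

end IsLimitCone

theorem statement12_general (F : Type) [Field F] (M : PersistenceModule F (ℝ × ℝ))
    (C : ℝ × ℝ → Set (ℝ × ℝ))
    (hmem : ∀ j, j ∈ C j)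
    (hfin : (Set.range C).Finite)
    (hconn : ∀ j, ZigzagConnected (C j))
    (hconv : ∀ j, PosetConvex (C j))
    (hiso : ∀ (j x y : ℝ × ℝ), x ∈ C j → y ∈ C j → ∀ h : x ≤ y,
      Function.Bijective (M.map h))
    (Nt : PersistenceModule F (ChamberPoset C))
    (σ : ∀ (p : ChamberPoset C) (i : ↥p.1), Nt.V p →ₗ[F] M.V ↑i)
    (hlim : ∀ p : ChamberPoset C, IsLimitCone (M.restrict p.1) (Nt.V p) (σ p))
    (hmap : ∀ (p q : ChamberPoset C) (h : p ≤ q) (a : ↥p.1) (b : ↥q.1)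
      (hab : (a : ℝ × ℝ) ≤ (b : ℝ × ℝ)),
      (σ q b).comp (Nt.map h) = (M.map hab).comp (σ p a)) :
    (∃ f : ∀ j : ℝ × ℝ, M.V j ≃ₗ[F] Nt.V (chamberMap C j),
      ∀ (j₁ j₂ : ℝ × ℝ) (h : j₁ ≤ j₂),
        (Nt.map (chamberMap_monotone C hmem h)).comp (f j₁).toLinearMap
          = (f j₂).toLinearMap.comp (M.map h)) ∧
    Finite (ChamberPoset C) := by
  have hleg : ∀ j, Bijective (σ (chamberMap C j) ⟨j, hmem j⟩) := fun j =>
    (hlim (chamberMap C j)).bijective_leg (hconv j) (hconn j)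
      (fun x y hx hy h => hiso j x y hx hy h) _
  let e j := LinearEquiv.ofBijective _ (hleg j)
  refine ⟨⟨fun j => (e j).symm, fun j₁ j₂ h => ?_⟩, hfin.to_subtype⟩
  ext v
  apply (hleg j₂).injective
  have hnat := LinearMap.congr_fun (hmap _ _ (chamberMap_monotone C hmem h)
    ⟨j₁, hmem j₁⟩ ⟨j₂, hmem j₂⟩ h) ((e j₁).symm v)
  simpa [e] using hnat

/-- Let `M` be a p.f.d. persistence module on `(ℝ,≤)²` admitting a
finite convex isotopy subdivision (encoded by the chamber map `C`), with poset of
chambers `ChamberPoset C` and chamber map `F_M = chamberMap C`. If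
`Ñ : (P,≤) → vect_F` assigns to each chamber a limit of `M` over that chamber (with
limit-cone legs `σ`) and to each relation `p ≤ q` the canonical map between the
limits, then `M ≅ Ñ ∘ F_M`; in particular (the poset of chambers being finite) this
is a finite encoding of `M`. -/
theorem statement12 (F : Type) [Field F] (M : PersistenceModule F (ℝ × ℝ))
    (hfd : ∀ j, FiniteDimensional F (M.V j))
    (C : ℝ × ℝ → Set (ℝ × ℝ))
    (hmem : ∀ j, j ∈ C j)
    (hpart : ∀ j k, k ∈ C j → C k = C j)
    (hfin : (Set.range C).Finite)
    (hconn : ∀ j, ZigzagConnected (C j))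
    (hconv : ∀ j, PosetConvex (C j))
    (hiso : ∀ (j x y : ℝ × ℝ), x ∈ C j → y ∈ C j → ∀ h : x ≤ y,
      Function.Bijective (M.map h))
    (Nt : PersistenceModule F (ChamberPoset C))
    (σ : ∀ (p : ChamberPoset C) (i : ↥p.1), Nt.V p →ₗ[F] M.V ↑i)
    (hlim : ∀ p : ChamberPoset C, IsLimitCone (M.restrict p.1) (Nt.V p) (σ p))
    (hmap : ∀ (p q : ChamberPoset C) (h : p ≤ q) (a : ↥p.1) (b : ↥q.1)
      (hab : (a : ℝ × ℝ) ≤ (b : ℝ × ℝ)),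
      (σ q b).comp (Nt.map h) = (M.map hab).comp (σ p a)) :
    (∃ f : ∀ j : ℝ × ℝ, M.V j ≃ₗ[F] Nt.V (chamberMap C j),
      ∀ (j₁ j₂ : ℝ × ℝ) (h : j₁ ≤ j₂),
        (Nt.map (chamberMap_monotone C hmem h)).comp (f j₁).toLinearMap
          = (f j₂).toLinearMap.comp (M.map h)) ∧
    Finite (ChamberPoset C) :=
  statement12_general F M C hmem hfin hconn hconv hiso Nt σ hlim hmap
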